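/- Define y := Q², where Q is the unique solution of Q = -x/2 + Σ_{a≥0} T_{2a+1}·Q^{2a+1}/a!. Then for every a ≥ 0, y satisfies the dispersionless KdV flow equation ∂y/∂T_{2a+1} = (y^a/a!) · ∂y/∂T_1. -/

import Mathlib

noncomputable section

/-- The ring `ℂ[[x+2]][[T_1, T_3, T_5, …]]`; variable `a : ℕ` stands for `T_{2a+1}`. -/
abbrev OSRing := MvPowerSeries ℕ (PowerSeries ℂ)

/-- The series `x = (x+2) - 2` in `ℂ[[x+2]]`. -/
def xser : PowerSeries ℂ := PowerSeries.X - 2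

/-- Formal partial derivative `∂/∂T_{2a+1}` on `ℂ[[x+2]][[T_1, T_3, …]]`. -/
def pderivT (a : ℕ) (f : OSRing) : OSRing :=
  fun d => (d a + 1) • MvPowerSeries.coeff (d + Finsupp.single a 1) f

/-- Formal partial derivative `∂/∂x` on `ℂ[[x+2]][[T_1, T_3, …]]`, acting on coefficients
(note `∂/∂x = ∂/∂(x+2)`). -/
def pderivX (f : OSRing) : OSRing :=
  fun d => PowerSeries.derivative (R := ℂ) (MvPowerSeries.coeff d f)

/-- `Q` solves `Q = -x/2 + Σ_{a ≥ 0} T_{2a+1} Q^{2a+1}/a!` (coefficientwise, the infinite sum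
being locally finite). -/
def SolvesQ (Q : OSRing) : Prop :=
  ∀ d : ℕ →₀ ℕ,
    MvPowerSeries.coeff d Q
      = MvPowerSeries.coeff d
          (MvPowerSeries.C (σ := ℕ) (R := PowerSeries ℂ) ((-(1:ℂ)/2) • xser))
        + ∑ a ∈ d.support,
            ((a.factorial : ℂ)⁻¹) •
              MvPowerSeries.coeff d (MvPowerSeries.X a * Q ^ (2*a+1))

open MvPowerSeries in
lemma OS.coeff_pderivT (a : ℕ) (f : OSRing) (d : ℕ →₀ ℕ) :
    MvPowerSeries.coeff d (pderivT a f)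
      = (d a + 1) • MvPowerSeries.coeff (d + Finsupp.single a 1) f := rfl

lemma OS.coeff_csmul (c : ℂ) (f : OSRing) (d : ℕ →₀ ℕ) :
    MvPowerSeries.coeff d (c • f) = c • MvPowerSeries.coeff d f := rfl

/-- reindexing lemma for the first coordinate -/
lemma OS.shift_sum₁ (a : ℕ) (d : ℕ →₀ ℕ) (h : (ℕ →₀ ℕ) → (ℕ →₀ ℕ) → PowerSeries ℂ) :
    ∑ p ∈ Finset.HasAntidiagonal.antidiagonal (d + Finsupp.single a 1), ((p.1 : ℕ →₀ ℕ) a) • h p.1 p.2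
      = ∑ q ∈ Finset.HasAntidiagonal.antidiagonal d, (((q.1 : ℕ →₀ ℕ) a) + 1) • h (q.1 + Finsupp.single a 1) q.2 := by
  classical
  set e := Finsupp.single a 1 with he
  have hfil : ∀ p ∈ Finset.HasAntidiagonal.antidiagonal (d + e),
      ((p.1 : ℕ →₀ ℕ) a) • h p.1 p.2 ≠ 0 → (p.1 : ℕ →₀ ℕ) a ≠ 0 := by
    rintro ⟨u, v⟩ _ hne h0
    apply hne
    show u a • h u v = 0
    rw [h0, zero_smul]
  rw [← Finset.sum_filter_of_ne hfil]
  refine Finset.sum_nbij' (fun p => (p.1 - e, p.2)) (fun q => (q.1 + e, q.2)) ?_ ?_ ?_ ?_ ?_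
  · rintro ⟨u, v⟩ hm
    rw [Finset.mem_filter, Finset.HasAntidiagonal.mem_antidiagonal] at hm
    obtain ⟨h1, h2⟩ := hm
    have h2' : u a ≠ 0 := h2
    have hle : e ≤ u := by rw [he, Finsupp.single_le_iff]; omega
    rw [Finset.HasAntidiagonal.mem_antidiagonal]
    show u - e + v = d
    ext x
    have hx := DFunLike.congr_fun h1 x
    have hlex := Finsupp.le_def.mp hle x
    simp only [Finsupp.add_apply, Finsupp.tsub_apply] at hx ⊢
    omega
  · rintro ⟨u, v⟩ hm
    rw [Finset.HasAntidiagonal.mem_antidiagonal] at hm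
    rw [Finset.mem_filter, Finset.HasAntidiagonal.mem_antidiagonal]
    constructor
    · show u + e + v = d + e
      rw [← hm]; exact add_right_comm u e v
    · show (u + e) a ≠ 0
      rw [Finsupp.add_apply, he, Finsupp.single_eq_same]
      omega
  · rintro ⟨u, v⟩ hm
    rw [Finset.mem_filter, Finset.HasAntidiagonal.mem_antidiagonal] at hm
    have h3 : u a ≠ 0 := hm.2
    have hle : e ≤ u := by rw [he, Finsupp.single_le_iff]; omega
    show (u - e + e, v) = (u, v)
    rw [tsub_add_cancel_of_le hle]
  · rintro ⟨u, v⟩ _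
    show (u + e - e, v) = (u, v)
    rw [add_tsub_cancel_right]
  · rintro ⟨u, v⟩ hm
    rw [Finset.mem_filter, Finset.HasAntidiagonal.mem_antidiagonal] at hm
    have h3 : u a ≠ 0 := hm.2
    have hle : e ≤ u := by rw [he, Finsupp.single_le_iff]; omega
    show u a • h u v = ((u - e) a + 1) • h (u - e + e) v
    rw [tsub_add_cancel_of_le hle]
    congr 1
    rw [Finsupp.tsub_apply, he, Finsupp.single_eq_same]
    omega

/-- reindexing lemma for the second coordinate -/
lemma OS.shift_sum₂ (a : ℕ) (d : ℕ →₀ ℕ) (h : (ℕ →₀ ℕ) → (ℕ →₀ ℕ) → PowerSeries ℂ) :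
    ∑ p ∈ Finset.HasAntidiagonal.antidiagonal (d + Finsupp.single a 1), ((p.2 : ℕ →₀ ℕ) a) • h p.1 p.2
      = ∑ q ∈ Finset.HasAntidiagonal.antidiagonal d, (((q.2 : ℕ →₀ ℕ) a) + 1) • h q.1 (q.2 + Finsupp.single a 1) := by
  classical
  have h1 := OS.shift_sum₁ a d (fun u v => h v u)
  rw [← Finset.HasAntidiagonal.map_swap_antidiagonal (n := d + Finsupp.single a 1),
    ← Finset.HasAntidiagonal.map_swap_antidiagonal (n := d), Finset.sum_map, Finset.sum_map]
  exact h1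

/-- Leibniz rule for `pderivT`. -/
lemma OS.pderivT_mul (a : ℕ) (f g : OSRing) :
    pderivT a (f * g) = pderivT a f * g + f * pderivT a g := by
  classical
  apply MvPowerSeries.ext
  intro d
  set e := Finsupp.single a 1 with he
  rw [map_add, OS.coeff_pderivT, MvPowerSeries.coeff_mul, MvPowerSeries.coeff_mul,
    MvPowerSeries.coeff_mul, Finset.smul_sum]
  have step1 : ∀ p ∈ Finset.HasAntidiagonal.antidiagonal (d + e),
      (d a + 1) • (MvPowerSeries.coeff p.1 f * MvPowerSeries.coeff p.2 g)
        = p.1 a • (MvPowerSeries.coeff p.1 f * MvPowerSeries.coeff p.2 g)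
          + p.2 a • (MvPowerSeries.coeff p.1 f * MvPowerSeries.coeff p.2 g) := by
    intro p hp
    rw [Finset.HasAntidiagonal.mem_antidiagonal] at hp
    have : p.1 a + p.2 a = d a + 1 := by
      have := DFunLike.congr_fun hp a
      simpa [he, Finsupp.add_apply] using this
    rw [← add_smul, this]
  rw [Finset.sum_congr rfl step1, Finset.sum_add_distrib,
    OS.shift_sum₁ a d (fun u v => MvPowerSeries.coeff u f * MvPowerSeries.coeff v g),
    OS.shift_sum₂ a d (fun u v => MvPowerSeries.coeff u f * MvPowerSeries.coeff v g)]
  congr 1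
  · apply Finset.sum_congr rfl
    intro q _
    rw [OS.coeff_pderivT, smul_mul_assoc]
  · apply Finset.sum_congr rfl
    intro q _
    rw [OS.coeff_pderivT, mul_smul_comm]

lemma OS.pderivT_add (a : ℕ) (f g : OSRing) :
    pderivT a (f + g) = pderivT a f + pderivT a g := by
  apply MvPowerSeries.ext; intro d
  show (d a + 1) • MvPowerSeries.coeff _ (f + g) = _
  rw [map_add, smul_add]; rfl

lemma OS.pderivT_C (a : ℕ) (r : PowerSeries ℂ) :
    pderivT a (MvPowerSeries.C (σ := ℕ) (R := PowerSeries ℂ) r) = 0 := by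
  apply MvPowerSeries.ext; intro d
  show (d a + 1) • MvPowerSeries.coeff (d + Finsupp.single a 1) (MvPowerSeries.C r) = _
  rw [MvPowerSeries.coeff_C, if_neg, smul_zero, map_zero]
  intro h
  have := DFunLike.congr_fun h a
  simp [Finsupp.add_apply] at this

lemma OS.pderivT_X (a c : ℕ) :
    pderivT a (MvPowerSeries.X c : OSRing) = if a = c then 1 else 0 := by
  classical
  apply MvPowerSeries.ext; intro d
  rw [OS.coeff_pderivT, MvPowerSeries.coeff_X]
  rcases eq_or_ne a c with rfl | hac
  · rcases eq_or_ne d 0 with rfl | hd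
    · simp
    · rw [if_neg, smul_zero, if_pos rfl, MvPowerSeries.coeff_one, if_neg hd]
      intro h
      apply hd
      have : d + Finsupp.single a 1 = 0 + Finsupp.single a 1 := by
        rw [zero_add, h]
      exact add_right_cancel this
  · rw [if_neg, smul_zero, if_neg hac, map_zero]
    intro h
    have := DFunLike.congr_fun h a
    rw [Finsupp.add_apply, Finsupp.single_eq_same, Finsupp.single_apply,
      if_neg (Ne.symm hac)] at this
    omega

lemma OS.pderivT_pow (a n : ℕ) (Q : OSRing) :
    pderivT a (Q ^ (n + 1)) = (n + 1) • (Q ^ n * pderivT a Q) := by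
  induction n with
  | zero => simp [pow_one, OS.pderivT_mul]
  | succ n ih =>
    rw [pow_succ, OS.pderivT_mul, ih, smul_mul_assoc]
    have hcomm : Q ^ n * pderivT a Q * Q = Q ^ (n + 1) * pderivT a Q := by
      rw [pow_succ]; ring
    rw [hcomm]
    exact (succ_nsmul (Q ^ (n + 1) * pderivT a Q) (n + 1)).symm

/-- The series `G(Q) = Σ_a T_{2a+1} Q^{2a+1}/a!`, defined coefficientwise. -/
def OS.G (Q : OSRing) : OSRing := fun d =>
  ∑ c ∈ d.support,
    ((c.factorial : ℂ)⁻¹) • MvPowerSeries.coeff d (MvPowerSeries.X c * Q ^ (2*c+1))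

/-- The series `F(Q) = Σ_a (2a+1) T_{2a+1} Q^{2a}/a!`, defined coefficientwise. -/
def OS.F (Q : OSRing) : OSRing := fun d =>
  ∑ c ∈ d.support,
    ((c.factorial : ℂ)⁻¹) • (2*c+1) • MvPowerSeries.coeff d (MvPowerSeries.X c * Q ^ (2*c))

lemma OS.coeff_X_mul_eq_zero {c : ℕ} {d : ℕ →₀ ℕ} (h : d c = 0) (P : OSRing) :
    MvPowerSeries.coeff d (MvPowerSeries.X c * P) = 0 := by
  rw [MvPowerSeries.X, MvPowerSeries.coeff_monomial_mul, if_neg]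
  intro hle
  have := hle c
  rw [Finsupp.single_eq_same, h] at this
  omega

/-- Multiplication by `F` computed coefficientwise. -/
lemma OS.coeff_F_mul (Q P : OSRing) (d : ℕ →₀ ℕ) :
    MvPowerSeries.coeff d (OS.F Q * P)
      = ∑ c ∈ d.support,
          ((c.factorial : ℂ)⁻¹) • (2*c+1) •
            MvPowerSeries.coeff d (MvPowerSeries.X c * Q ^ (2*c) * P) := by
  classical
  rw [MvPowerSeries.coeff_mul]
  have step1 : ∀ p ∈ Finset.HasAntidiagonal.antidiagonal d,
      MvPowerSeries.coeff p.1 (OS.F Q) * MvPowerSeries.coeff p.2 P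
        = ∑ c ∈ d.support,
            ((c.factorial : ℂ)⁻¹) • (2*c+1) •
              (MvPowerSeries.coeff p.1 (MvPowerSeries.X c * Q ^ (2*c))
                * MvPowerSeries.coeff p.2 P) := by
    rintro ⟨u, v⟩ hp
    rw [Finset.HasAntidiagonal.mem_antidiagonal] at hp
    replace hp : u + v = d := hp
    show (OS.F Q) u * _ = _
    have hsub : u.support ⊆ d.support := by
      intro c hc
      rw [Finsupp.mem_support_iff] at hc ⊢
      intro h0
      apply hc
      have := DFunLike.congr_fun hp c
      rw [Finsupp.add_apply] at this
      omega
    have hzero : ∀ c ∈ d.support, c ∉ u.support →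
        (((c.factorial : ℂ)⁻¹) • (2*c+1) •
          MvPowerSeries.coeff u (MvPowerSeries.X c * Q ^ (2*c)))
            * MvPowerSeries.coeff v P = 0 := by
      intro c _ hc
      rw [Finsupp.mem_support_iff, not_not] at hc
      rw [OS.coeff_X_mul_eq_zero hc, smul_zero, smul_zero, zero_mul]
    rw [OS.F, Finset.sum_mul, Finset.sum_subset hsub hzero]
    apply Finset.sum_congr rfl
    intro c _
    rw [smul_mul_assoc, smul_mul_assoc]
  rw [Finset.sum_congr rfl step1, Finset.sum_comm]
  apply Finset.sum_congr rfl
  intro c _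
  rw [← Finset.smul_sum, ← Finset.smul_sum, ← MvPowerSeries.coeff_mul]

lemma OS.constantCoeff_F (Q : OSRing) :
    MvPowerSeries.constantCoeff (σ := ℕ) (R := PowerSeries ℂ) (OS.F Q) = 0 := by
  show OS.F Q 0 = 0
  rw [OS.F]
  simp

/-- The key differentiated equation: `(1 - F) ∂Q/∂T_b = Q^{2b+1}/b!`. -/
lemma OS.key_eq (Q : OSRing) (hQ : SolvesQ Q) (b : ℕ) :
    pderivT b Q
      = ((b.factorial : ℂ)⁻¹) • Q ^ (2*b+1) + OS.F Q * pderivT b Q := by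
  classical
  have hQ' : Q = MvPowerSeries.C (σ := ℕ) (R := PowerSeries ℂ) ((-(1:ℂ)/2) • xser) + OS.G Q := by
    apply MvPowerSeries.ext
    intro d
    rw [hQ d, map_add]
    rfl
  set e := Finsupp.single b 1 with he
  apply MvPowerSeries.ext
  intro d
  have lhs_eq : MvPowerSeries.coeff d (pderivT b Q)
      = ∑ c ∈ (d + e).support,
          ((c.factorial : ℂ)⁻¹) •
            MvPowerSeries.coeff d (pderivT b (MvPowerSeries.X c * Q ^ (2*c+1))) := by
    conv_lhs => rw [hQ', OS.pderivT_add, OS.pderivT_C, zero_add]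
    rw [OS.coeff_pderivT]
    show ((d b + 1) • OS.G Q (d + e)) = _
    rw [OS.G, Finset.smul_sum]
    apply Finset.sum_congr rfl
    intro c _
    rw [OS.coeff_pderivT, smul_comm]
  rw [lhs_eq]
  have deriv_term : ∀ c : ℕ,
      pderivT b (MvPowerSeries.X c * Q ^ (2*c+1))
        = (if b = c then Q ^ (2*c+1) else 0)
          + MvPowerSeries.X c * ((2*c+1) • (Q ^ (2*c) * pderivT b Q)) := by
    intro c
    rw [OS.pderivT_mul, OS.pderivT_X]
    congr 1
    · split_ifs with h
      · rw [one_mul]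
      · rw [zero_mul]
    · have h2c : 2*c + 1 = (2*c) + 1 := rfl
      rw [h2c, OS.pderivT_pow]
  have split : ∀ c ∈ (d + e).support,
      ((c.factorial : ℂ)⁻¹) •
          MvPowerSeries.coeff d (pderivT b (MvPowerSeries.X c * Q ^ (2*c+1)))
        = (if b = c then ((c.factorial : ℂ)⁻¹) • MvPowerSeries.coeff d (Q ^ (2*c+1)) else 0)
          + ((c.factorial : ℂ)⁻¹) • (2*c+1) •
              MvPowerSeries.coeff d (MvPowerSeries.X c * Q ^ (2*c) * pderivT b Q) := by
    intro c _
    rw [deriv_term c, map_add, smul_add]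
    congr 1
    · split_ifs with h
      · rfl
      · rw [map_zero, smul_zero]
    · rw [mul_smul_comm, ← mul_assoc, map_nsmul, smul_comm]
  rw [Finset.sum_congr rfl split, Finset.sum_add_distrib]
  rw [map_add, OS.coeff_csmul, OS.coeff_F_mul]
  congr 1
  · rw [Finset.sum_ite_eq, if_pos]
    rw [Finsupp.mem_support_iff, Finsupp.add_apply, he, Finsupp.single_eq_same]
    omega
  · symm
    refine Finset.sum_subset ?_ ?_
    · intro c hc
      rw [Finsupp.mem_support_iff] at hc ⊢
      rw [Finsupp.add_apply]
      omega
    · intro c _ hc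
      rw [Finsupp.mem_support_iff, not_not] at hc
      rw [mul_assoc, OS.coeff_X_mul_eq_zero hc, smul_zero, smul_zero]

/-- `y := Q²` satisfies the dispersionless KdV flow equations
`∂y/∂T_{2a+1} = (y^a/a!)·∂y/∂T_1` for every `a ≥ 0`. -/
theorem okuyama_sakai_y_flows (Q : OSRing) (hQ : SolvesQ Q) (a : ℕ) :
    pderivT a (Q ^ 2) = ((a.factorial : ℂ)⁻¹) • ((Q ^ 2) ^ a * pderivT 0 (Q ^ 2)) := by
  classical
  set F := OS.F Q with hF
  have hu : MvPowerSeries.constantCoeff (σ := ℕ) (R := PowerSeries ℂ) (1 - F)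
      = ((1 : (PowerSeries ℂ)ˣ) : PowerSeries ℂ) := by
    rw [map_sub, map_one, hF, OS.constantCoeff_F, sub_zero, Units.val_one]
  set v := MvPowerSeries.invOfUnit (1 - F) 1 with hv
  have hvu : v * (1 - F) = 1 := MvPowerSeries.invOfUnit_mul _ _ hu
  have key : ∀ b : ℕ, (1 - F) * pderivT b Q = ((b.factorial : ℂ)⁻¹) • Q ^ (2*b+1) := by
    intro b
    rw [sub_mul, one_mul]
    exact sub_eq_iff_eq_add.mpr (OS.key_eq Q hQ b)
  have solved : ∀ b : ℕ, pderivT b Q = ((b.factorial : ℂ)⁻¹) • (v * Q ^ (2*b+1)) := by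
    intro b
    calc pderivT b Q = v * ((1 - F) * pderivT b Q) := by
          rw [← mul_assoc, hvu, one_mul]
      _ = ((b.factorial : ℂ)⁻¹) • (v * Q ^ (2*b+1)) := by
          rw [key b, mul_smul_comm]
  have hsq : ∀ b : ℕ, pderivT b (Q ^ 2) = 2 • (Q * pderivT b Q) := by
    intro b
    have := OS.pderivT_pow b 1 Q
    simpa using this
  rw [hsq a, hsq 0, solved a, solved 0]
  simp only [Nat.factorial_zero, Nat.cast_one, inv_one, one_smul, pow_one]
  rw [mul_smul_comm, mul_smul_comm, smul_comm (2 : ℕ) ((a.factorial : ℂ)⁻¹)]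
  congr 2
  rw [← pow_mul]
  ring
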